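/- Let μ be a probability measure with finite entropy H(μ) < ∞ on a countable discrete group G, and let 0 < α ≤ 1. Then the asymptotic entropy of the lazy measure ν = (1−α)δ_e + αμ satisfies h(G,ν) = α · h(G,μ). -/

import Mathlib

open Filter Topology
open scoped Classical

/-- A probability measure on a countable discrete group `G`:
a nonnegative function summing to `1`. -/
def IsProbMeasure {G : Type*} (μ : G → ℝ) : Prop :=
  (∀ g, 0 ≤ μ g) ∧ HasSum μ 1

/-- Convolution of two measures on a discrete group: `(μ*ν)(g) = ∑_h μ(h) ν(h⁻¹g)`. -/
noncomputable def conv {G : Type*} [Group G] (μ ν : G → ℝ) : G → ℝ :=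
  fun g => ∑' h, μ h * ν (h⁻¹ * g)

/-- Convolution powers of a measure, with `μ^{*0} = δ_e`. -/
noncomputable def convPow {G : Type*} [Group G] (μ : G → ℝ) : ℕ → G → ℝ
  | 0 => fun g => if g = 1 then 1 else 0
  | n + 1 => conv (convPow μ n) μ

/-- The entropy `H(μ) = ∑_g −μ(g) log μ(g) ∈ [0,∞]` of a probability measure on a
countable discrete group. -/
noncomputable def entropy {G : Type*} (μ : G → ℝ) : ENNReal :=
  ∑' g, ENNReal.ofReal (-(μ g * Real.log (μ g)))

/-!
Under the lazy walk each step moves by `μ` with probability `α` and stays put otherwise, so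
`ν^{*n} = ∑ₖ Bin(n, α)(k) μ^{*k}`. Concavity of entropy and the entropy bound for mixtures give
`H(ν^{*n}) = ∑ₖ Bin(n, α)(k) H(μ^{*k}) + O(log n)`. Since `H(μ^{*k}) = k h + o(k)` and `Bin(n, α)`
has mean `α n`, this average is `α n h + o(n)`.
-/

open Finset Real Asymptotics

section

variable {ι κ G : Type*}

namespace IsProbMeasure

variable {μ : ι → ℝ}

lemma nonneg (hμ : IsProbMeasure μ) (i : ι) : 0 ≤ μ i := hμ.1 i

lemma summable (hμ : IsProbMeasure μ) : Summable μ := hμ.2.summable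

lemma le_one (hμ : IsProbMeasure μ) (i : ι) : μ i ≤ 1 :=
  le_hasSum hμ.2 i fun j _ => hμ.1 j

lemma negMulLog_nonneg (hμ : IsProbMeasure μ) (i : ι) : 0 ≤ negMulLog (μ i) :=
  Real.negMulLog_nonneg (hμ.nonneg i) (hμ.le_one i)

lemma tsum_ofReal (hμ : IsProbMeasure μ) : ∑' i, ENNReal.ofReal (μ i) = 1 := by
  rw [← ENNReal.ofReal_tsum_of_nonneg hμ.1 hμ.summable, hμ.2.tsum_eq, ENNReal.ofReal_one]

lemma summable_mul {f : ι → ℝ} (hμ : IsProbMeasure μ) (hf0 : ∀ i, 0 ≤ f i) (hf1 : ∀ i, f i ≤ 1) :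
    Summable fun i => μ i * f i :=
  hμ.summable.of_nonneg_of_le (fun i => mul_nonneg (hμ.nonneg i) (hf0 i))
    fun i => mul_le_of_le_one_right (hμ.nonneg i) (hf1 i)

lemma comp_equiv (hμ : IsProbMeasure μ) (e : κ ≃ ι) : IsProbMeasure (μ ∘ e) :=
  ⟨fun k => hμ.nonneg (e k), e.hasSum_iff.mpr hμ.2⟩

lemma tsum_mul {p : κ → ℝ} {ρ : κ → ι → ℝ} (hp : IsProbMeasure p)
    (hρ : ∀ k, IsProbMeasure (ρ k)) : IsProbMeasure fun i => ∑' k, p k * ρ k i := by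
  have hf0 : ∀ x : κ × ι, 0 ≤ p x.1 * ρ x.1 x.2 :=
    fun x => mul_nonneg (hp.nonneg x.1) ((hρ x.1).nonneg x.2)
  have hfiber : ∀ k, HasSum (fun i => p k * ρ k i) (p k) := fun k => by
    simpa using (hρ k).2.mul_left (p k)
  have hf : Summable fun x : κ × ι => p x.1 * ρ x.1 x.2 :=
    (summable_prod_of_nonneg hf0).2 ⟨fun k => (hfiber k).summable, by
      simpa only [fun k => (hfiber k).tsum_eq] using hp.summable⟩
  have hsum : HasSum (fun x : κ × ι => p x.1 * ρ x.1 x.2) 1 := by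
    simpa [hf.tsum_prod, fun k => (hfiber k).tsum_eq, hp.2.tsum_eq] using hf.hasSum
  refine ⟨fun i => tsum_nonneg fun k => hf0 (k, i), ?_⟩
  exact ((Equiv.prodComm ι κ).hasSum_iff.mpr hsum).prod_fiberwise fun i =>
    (hf.comp_injective (Equiv.prodComm ι κ).injective).prod_factor i |>.hasSum

end IsProbMeasure

lemma isProbMeasure_ite_eq (a : ι) : IsProbMeasure fun i => if i = a then (1 : ℝ) else 0 :=
  ⟨fun i => by dsimp only; split_ifs <;> norm_num, hasSum_ite_eq a 1⟩

lemma entropy_eq_tsum_negMulLog (μ : ι → ℝ) :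
    entropy μ = ∑' i, ENNReal.ofReal (negMulLog (μ i)) := by
  simp only [entropy, negMulLog_eq_neg]

lemma entropy_ite_eq (a : ι) : entropy (fun i => if i = a then (1 : ℝ) else 0) = 0 :=
  ENNReal.tsum_eq_zero.mpr fun i => by dsimp only; split_ifs <;> simp

lemma entropy_comp_equiv (μ : ι → ℝ) (e : κ ≃ ι) : entropy (μ ∘ e) = entropy μ :=
  e.tsum_eq fun i => ENNReal.ofReal (-(μ i * Real.log (μ i)))

lemma negMulLog_add_le {a b : ℝ} (ha : 0 ≤ a) (hb : 0 ≤ b) :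
    negMulLog (a + b) ≤ negMulLog a + negMulLog b := by
  have key : ∀ {x y : ℝ}, 0 ≤ x → 0 ≤ y → x * log x ≤ x * log (x + y) := fun {x y} hx hy => by
    rcases hx.eq_or_lt with rfl | hx
    · simp
    · exact mul_le_mul_of_nonneg_left (log_le_log hx (by linarith)) hx.le
  have hb' : b * log b ≤ b * log (a + b) := by simpa only [add_comm b a] using key hb ha
  simp only [negMulLog, neg_mul]
  linarith [key ha hb]

lemma ofReal_negMulLog_sum_le (s : Finset ι) {x : ι → ℝ} (hx : ∀ i ∈ s, 0 ≤ x i) :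
    ENNReal.ofReal (negMulLog (∑ i ∈ s, x i)) ≤ ∑ i ∈ s, ENNReal.ofReal (negMulLog (x i)) :=
  le_sum_of_subadditive_on_pred (fun t => ENNReal.ofReal (negMulLog t)) (0 ≤ ·) (by simp)
    (fun _ _ ha hb => (ENNReal.ofReal_le_ofReal (negMulLog_add_le ha hb)).trans
      ENNReal.ofReal_add_le)
    (fun _ _ => add_nonneg) x hx

lemma ofReal_negMulLog_tsum_le {x : ι → ℝ} (hx : ∀ i, 0 ≤ x i) (hs : Summable x) :
    ENNReal.ofReal (negMulLog (∑' i, x i)) ≤ ∑' i, ENNReal.ofReal (negMulLog (x i)) := by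
  have hlim : Tendsto (fun s : Finset ι => ENNReal.ofReal (negMulLog (∑ i ∈ s, x i))) atTop
      (𝓝 (ENNReal.ofReal (negMulLog (∑' i, x i)))) :=
    ((ENNReal.continuous_ofReal.comp continuous_negMulLog).tendsto _).comp hs.hasSum
  exact le_of_tendsto hlim (Eventually.of_forall fun s =>
    (ofReal_negMulLog_sum_le s fun i _ => hx i).trans (ENNReal.sum_le_tsum s))

lemma tsum_ofReal_negMulLog_mul {ρ : ι → ℝ} (hρ : IsProbMeasure ρ) {c : ℝ} (hc0 : 0 ≤ c)
    (hc1 : c ≤ 1) :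
    ∑' i, ENNReal.ofReal (negMulLog (c * ρ i)) =
      ENNReal.ofReal c * entropy ρ + ENNReal.ofReal (negMulLog c) := by
  have hc : 0 ≤ negMulLog c := Real.negMulLog_nonneg hc0 hc1
  have hpt : ∀ i, ENNReal.ofReal (negMulLog (c * ρ i)) =
      ENNReal.ofReal c * ENNReal.ofReal (negMulLog (ρ i)) +
        ENNReal.ofReal (negMulLog c) * ENNReal.ofReal (ρ i) := fun i => by
    rw [negMulLog_mul, ENNReal.ofReal_add (mul_nonneg (hρ.nonneg i) hc)
      (mul_nonneg hc0 (hρ.negMulLog_nonneg i)), ENNReal.ofReal_mul (hρ.nonneg i),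
      ENNReal.ofReal_mul hc0, add_comm, mul_comm (ENNReal.ofReal (ρ i))]
  rw [tsum_congr hpt, ENNReal.tsum_add, ENNReal.tsum_mul_left, ENNReal.tsum_mul_left,
    hρ.tsum_ofReal, mul_one, entropy_eq_tsum_negMulLog]

theorem entropy_tsum_mul_le {p : κ → ℝ} {ρ : κ → ι → ℝ} (hp : IsProbMeasure p)
    (hρ : ∀ k, IsProbMeasure (ρ k)) :
    entropy (fun i => ∑' k, p k * ρ k i) ≤
      ∑' k, ENNReal.ofReal (p k) * entropy (ρ k) + entropy p := by
  calc entropy (fun i => ∑' k, p k * ρ k i)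
      ≤ ∑' i, ∑' k, ENNReal.ofReal (negMulLog (p k * ρ k i)) := by
        rw [entropy_eq_tsum_negMulLog]
        exact ENNReal.tsum_le_tsum fun i =>
          ofReal_negMulLog_tsum_le (fun k => mul_nonneg (hp.nonneg k) ((hρ k).nonneg i))
            (hp.summable_mul (fun k => (hρ k).nonneg i) fun k => (hρ k).le_one i)
    _ = ∑' k, (ENNReal.ofReal (p k) * entropy (ρ k) + ENNReal.ofReal (negMulLog (p k))) := by
        rw [ENNReal.tsum_comm]
        exact tsum_congr fun k => tsum_ofReal_negMulLog_mul (hρ k) (hp.nonneg k) (hp.le_one k)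
    _ = _ := by rw [ENNReal.tsum_add, entropy_eq_tsum_negMulLog p]

theorem sum_mul_entropy_le_entropy_sum {s : Finset κ} {p : κ → ℝ} {ρ : κ → ι → ℝ}
    (hp0 : ∀ k ∈ s, 0 ≤ p k) (hp1 : ∑ k ∈ s, p k = 1) (hρ : ∀ k ∈ s, IsProbMeasure (ρ k)) :
    ∑ k ∈ s, ENNReal.ofReal (p k) * entropy (ρ k) ≤ entropy fun i => ∑ k ∈ s, p k * ρ k i := by
  have hpt : ∀ i, ∑ k ∈ s, p k * negMulLog (ρ k i) ≤ negMulLog (∑ k ∈ s, p k * ρ k i) :=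
    fun i => concaveOn_negMulLog.le_map_sum hp0 hp1 fun k hk => Set.mem_Ici.mpr ((hρ k hk).nonneg i)
  calc ∑ k ∈ s, ENNReal.ofReal (p k) * entropy (ρ k)
      = ∑' i, ENNReal.ofReal (∑ k ∈ s, p k * negMulLog (ρ k i)) := by
        simp only [entropy_eq_tsum_negMulLog, ← ENNReal.tsum_mul_left]
        rw [← Summable.tsum_finsetSum fun _ _ => ENNReal.summable]
        refine tsum_congr fun i => ?_
        rw [ENNReal.ofReal_sum_of_nonneg fun k hk =>
          mul_nonneg (hp0 k hk) ((hρ k hk).negMulLog_nonneg i)]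
        exact sum_congr rfl fun k hk => (ENNReal.ofReal_mul (hp0 k hk)).symm
    _ ≤ _ := by
        rw [entropy_eq_tsum_negMulLog]
        exact ENNReal.tsum_le_tsum fun i => ENNReal.ofReal_le_ofReal (hpt i)

lemma sum_negMulLog_le_log_card {s : Finset κ} {p : κ → ℝ} (hp0 : ∀ k ∈ s, 0 ≤ p k)
    (hp1 : ∑ k ∈ s, p k = 1) : ∑ k ∈ s, negMulLog (p k) ≤ log #s := by
  have hs : (0 : ℝ) < #s := by
    rw [Nat.cast_pos, card_pos]
    exact nonempty_of_sum_ne_zero (by rw [hp1]; exact one_ne_zero)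
  have hjensen := concaveOn_negMulLog.le_map_sum (t := s) (w := fun _ => (#s : ℝ)⁻¹)
    (fun _ _ => by positivity) (by simp [hs.ne']) fun k hk => Set.mem_Ici.mpr (hp0 k hk)
  simp only [smul_eq_mul, ← mul_sum, hp1, mul_one] at hjensen
  rw [negMulLog, log_inv] at hjensen
  refine le_of_mul_le_mul_left ?_ (inv_pos.mpr hs)
  linarith

section Group

variable [Group G]

lemma IsProbMeasure.conv {μ ν : G → ℝ} (hμ : IsProbMeasure μ) (hν : IsProbMeasure ν) :
    IsProbMeasure (conv μ ν) :=
  hμ.tsum_mul fun h => hν.comp_equiv (Equiv.mulLeft h⁻¹)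

lemma IsProbMeasure.convPow {μ : G → ℝ} (hμ : IsProbMeasure μ) (n : ℕ) :
    IsProbMeasure (convPow μ n) := by
  induction n with
  | zero => exact isProbMeasure_ite_eq 1
  | succ n ih => exact ih.conv hμ

theorem entropy_conv_le {μ ν : G → ℝ} (hμ : IsProbMeasure μ) (hν : IsProbMeasure ν) :
    entropy (conv μ ν) ≤ entropy μ + entropy ν := by
  have hmix := entropy_tsum_mul_le hμ fun h => hν.comp_equiv (Equiv.mulLeft h⁻¹)
  simp only [entropy_comp_equiv, ENNReal.tsum_mul_right, hμ.tsum_ofReal, one_mul] at hmix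
  rw [add_comm]
  exact hmix

lemma entropy_convPow_le {μ : G → ℝ} (hμ : IsProbMeasure μ) (n : ℕ) :
    entropy (convPow μ n) ≤ n * entropy μ := by
  induction n with
  | zero => simp [convPow, entropy_ite_eq]
  | succ n ih =>
    calc entropy (convPow μ (n + 1)) ≤ entropy (convPow μ n) + entropy μ :=
          entropy_conv_le (hμ.convPow n) hμ
      _ ≤ n * entropy μ + entropy μ := by gcongr
      _ = (n + 1 : ℕ) * entropy μ := by push_cast; ring

end Group

noncomputable def binomialWeight (α : ℝ) (n k : ℕ) : ℝ :=
  (bernsteinPolynomial ℝ n k).eval α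

lemma binomialWeight_eq (α : ℝ) (n k : ℕ) :
    binomialWeight α n k = n.choose k * α ^ k * (1 - α) ^ (n - k) := by
  simp [binomialWeight, bernsteinPolynomial]

lemma binomialWeight_nonneg {α : ℝ} (hα0 : 0 ≤ α) (hα1 : α ≤ 1) (n k : ℕ) :
    0 ≤ binomialWeight α n k := by
  rw [binomialWeight_eq]
  have : 0 ≤ 1 - α := sub_nonneg.mpr hα1
  positivity

lemma binomialWeight_of_lt (α : ℝ) {n k : ℕ} (h : n < k) : binomialWeight α n k = 0 := by
  simp [binomialWeight, bernsteinPolynomial.eq_zero_of_lt ℝ h]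

lemma sum_binomialWeight (α : ℝ) (n : ℕ) : ∑ k ∈ range (n + 1), binomialWeight α n k = 1 := by
  simpa [binomialWeight, Polynomial.eval_finsetSum] using
    congrArg (Polynomial.eval α) (bernsteinPolynomial.sum ℝ n)

lemma sum_natCast_mul_binomialWeight (α : ℝ) (n : ℕ) :
    ∑ k ∈ range (n + 1), k * binomialWeight α n k = n * α := by
  simpa [binomialWeight, Polynomial.eval_finsetSum] using
    congrArg (Polynomial.eval α) (bernsteinPolynomial.sum_smul ℝ n)

lemma binomialWeight_succ_zero (α : ℝ) (n : ℕ) :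
    binomialWeight α (n + 1) 0 = (1 - α) * binomialWeight α n 0 := by
  simp [binomialWeight_eq, pow_succ, mul_comm]

lemma binomialWeight_succ_succ (α : ℝ) (n k : ℕ) :
    binomialWeight α (n + 1) (k + 1) =
      α * binomialWeight α n k + (1 - α) * binomialWeight α n (k + 1) := by
  simp only [binomialWeight_eq, Nat.choose_succ_succ', Nat.cast_add, Nat.add_sub_add_right]
  rcases lt_or_ge k n with hk | hk
  · obtain ⟨m, rfl⟩ := Nat.exists_eq_add_of_lt hk
    rw [show k + m + 1 - k = m + 1 by omega, show k + m + 1 - (k + 1) = m by omega]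
    ring
  · rw [Nat.choose_eq_zero_of_lt (by omega : n < k + 1), Nat.sub_eq_zero_of_le hk]
    ring

lemma isProbMeasure_binomialWeight {α : ℝ} (hα0 : 0 ≤ α) (hα1 : α ≤ 1) (n : ℕ) :
    IsProbMeasure (binomialWeight α n) := by
  refine ⟨binomialWeight_nonneg hα0 hα1 n, ?_⟩
  rw [← sum_binomialWeight α n]
  exact hasSum_sum_of_ne_finset_zero fun k hk =>
    binomialWeight_of_lt α (by simpa using hk)

/-- One step of the lazy walk shifts the binomial index with probability `α`. -/
lemma sum_binomialWeight_succ_mul (α : ℝ) (n : ℕ) (f : ℕ → ℝ) :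
    ∑ k ∈ range (n + 2), binomialWeight α (n + 1) k * f k =
      ∑ k ∈ range (n + 1), binomialWeight α n k * ((1 - α) * f k + α * f (k + 1)) := by
  have hshift : ∑ k ∈ range (n + 1), binomialWeight α n (k + 1) * f (k + 1) =
      ∑ k ∈ range (n + 1), binomialWeight α n k * f k - binomialWeight α n 0 * f 0 := by
    rw [sum_range_succ, binomialWeight_of_lt α (lt_add_one n),
      sum_range_succ' (fun k => binomialWeight α n k * f k)]
    ring
  rw [sum_range_succ' (fun k => binomialWeight α (n + 1) k * f k)]
  simp only [binomialWeight_succ_succ, binomialWeight_succ_zero, add_mul, mul_add,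
    sum_add_distrib, mul_assoc, mul_left_comm (binomialWeight α n _), ← mul_sum, hshift]
  ring

lemma entropy_binomialWeight_le {α : ℝ} (hα0 : 0 ≤ α) (hα1 : α ≤ 1) (n : ℕ) :
    entropy (binomialWeight α n) ≤ ENNReal.ofReal (log (n + 1)) := by
  rw [entropy_eq_tsum_negMulLog, tsum_eq_sum (s := range (n + 1)) fun k hk => by
    simp [binomialWeight_of_lt α (by simpa using hk : n < k)]]
  rw [← ENNReal.ofReal_sum_of_nonneg fun k _ =>
    (isProbMeasure_binomialWeight hα0 hα1 n).negMulLog_nonneg k]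
  refine ENNReal.ofReal_le_ofReal ?_
  simpa using sum_negMulLog_le_log_card (fun k _ => binomialWeight_nonneg hα0 hα1 n k)
    (sum_binomialWeight α n)

section Lazy

variable [Group G]

noncomputable def lazyMeasure (μ : G → ℝ) (α : ℝ) : G → ℝ :=
  fun g => (1 - α) * (if g = 1 then 1 else 0) + α * μ g

lemma isProbMeasure_lazyMeasure {μ : G → ℝ} (hμ : IsProbMeasure μ) {α : ℝ} (hα0 : 0 ≤ α)
    (hα1 : α ≤ 1) : IsProbMeasure (lazyMeasure μ α) := by
  have hδ := isProbMeasure_ite_eq (1 : G)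
  refine ⟨fun g => add_nonneg (mul_nonneg (sub_nonneg.mpr hα1) (hδ.nonneg g))
    (mul_nonneg hα0 (hμ.nonneg g)), ?_⟩
  have hsum := (hδ.2.mul_left (1 - α)).add (hμ.2.mul_left α)
  rwa [mul_one, mul_one, sub_add_cancel] at hsum

lemma conv_lazyMeasure {ρ μ : G → ℝ} (hρ : IsProbMeasure ρ) (hμ : IsProbMeasure μ) (α : ℝ)
    (g : G) : conv ρ (lazyMeasure μ α) g = (1 - α) * ρ g + α * conv ρ μ g := by
  have hδ : ∑' h, ρ h * (if h⁻¹ * g = 1 then 1 else 0) = ρ g := by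
    rw [tsum_eq_single g fun h hh => by simp [inv_mul_eq_one, hh]]
    simp
  have hδs : Summable fun h => ρ h * (if h⁻¹ * g = 1 then 1 else 0) :=
    hρ.summable_mul (fun h => (isProbMeasure_ite_eq 1).nonneg _)
      fun h => (isProbMeasure_ite_eq 1).le_one _
  have hμs : Summable fun h => ρ h * μ (h⁻¹ * g) :=
    hρ.summable_mul (fun h => hμ.nonneg _) fun h => hμ.le_one _
  simp only [conv, lazyMeasure, mul_add, mul_left_comm (ρ _)]
  rw [(hδs.mul_left _).tsum_add (hμs.mul_left _), tsum_mul_left, tsum_mul_left, hδ]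

lemma conv_sum_left {s : Finset ℕ} {c : ℕ → ℝ} {ρ : ℕ → G → ℝ} {μ : G → ℝ}
    (hρ : ∀ k ∈ s, IsProbMeasure (ρ k)) (hμ : IsProbMeasure μ) (g : G) :
    conv (fun x => ∑ k ∈ s, c k * ρ k x) μ g = ∑ k ∈ s, c k * conv (ρ k) μ g := by
  simp only [conv, sum_mul, mul_assoc]
  rw [Summable.tsum_finsetSum fun k hk =>
    ((hρ k hk).summable_mul (fun h => hμ.nonneg _) fun h => hμ.le_one _).mul_left (c k)]
  exact sum_congr rfl fun k _ => tsum_mul_left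

/-- The lazy walk at time `n` is the `μ`-walk at an independent `Bin(n, α)` time. -/
theorem convPow_lazyMeasure {μ : G → ℝ} (hμ : IsProbMeasure μ) {α : ℝ} (hα0 : 0 ≤ α)
    (hα1 : α ≤ 1) (n : ℕ) (g : G) :
    convPow (lazyMeasure μ α) n g = ∑ k ∈ range (n + 1), binomialWeight α n k * convPow μ k g := by
  induction n generalizing g with
  | zero => simp [convPow, binomialWeight_eq]
  | succ n ih =>
    calc convPow (lazyMeasure μ α) (n + 1) g
        = (1 - α) * convPow (lazyMeasure μ α) n g + α * conv (convPow (lazyMeasure μ α) n) μ g :=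
          conv_lazyMeasure ((isProbMeasure_lazyMeasure hμ hα0 hα1).convPow n) hμ α g
      _ = ∑ k ∈ range (n + 1), binomialWeight α n k *
            ((1 - α) * convPow μ k g + α * convPow μ (k + 1) g) := by
          rw [funext ih, conv_sum_left (fun k _ => hμ.convPow k) hμ, mul_sum, mul_sum,
            ← sum_add_distrib]
          exact sum_congr rfl fun k _ => by simp only [convPow]; ring
      _ = _ := (sum_binomialWeight_succ_mul α n fun k => convPow μ k g).symm

end Lazy

section LazyEntropy

variable [Group G] {μ : G → ℝ} {α : ℝ}

lemma entropy_convPow_ne_top (hμ : IsProbMeasure μ) (hH : entropy μ ≠ ⊤) (k : ℕ) :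
    entropy (convPow μ k) ≠ ⊤ :=
  ((entropy_convPow_le hμ k).trans_lt (ENNReal.mul_lt_top (ENNReal.natCast_lt_top k) hH.lt_top)).ne

lemma sum_ofReal_binomialWeight_mul_entropy (hμ : IsProbMeasure μ) (hH : entropy μ ≠ ⊤)
    (hα0 : 0 ≤ α) (hα1 : α ≤ 1) (n : ℕ) :
    ∑ k ∈ range (n + 1), ENNReal.ofReal (binomialWeight α n k) * entropy (convPow μ k) =
      ENNReal.ofReal
        (∑ k ∈ range (n + 1), binomialWeight α n k * (entropy (convPow μ k)).toReal) := by
  rw [ENNReal.ofReal_sum_of_nonneg fun k _ =>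
    mul_nonneg (binomialWeight_nonneg hα0 hα1 n k) ENNReal.toReal_nonneg]
  refine sum_congr rfl fun k _ => ?_
  rw [ENNReal.ofReal_mul (binomialWeight_nonneg hα0 hα1 n k),
    ENNReal.ofReal_toReal (entropy_convPow_ne_top hμ hH k)]

lemma entropy_convPow_lazyMeasure_le (hμ : IsProbMeasure μ) (hH : entropy μ ≠ ⊤) (hα0 : 0 ≤ α)
    (hα1 : α ≤ 1) (n : ℕ) :
    entropy (convPow (lazyMeasure μ α) n) ≤
      ENNReal.ofReal (∑ k ∈ range (n + 1), binomialWeight α n k * (entropy (convPow μ k)).toReal) +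
        ENNReal.ofReal (log (n + 1)) := by
  have hsupp : ∀ k ∉ range (n + 1), binomialWeight α n k = 0 := fun k hk =>
    binomialWeight_of_lt α (by simpa using hk)
  have hlazy : convPow (lazyMeasure μ α) n = fun g => ∑' k, binomialWeight α n k * convPow μ k g :=
    funext fun g => by
      rw [convPow_lazyMeasure hμ hα0 hα1, tsum_eq_sum fun k hk => by simp [hsupp k hk]]
  calc entropy (convPow (lazyMeasure μ α) n)
      ≤ ∑' k, ENNReal.ofReal (binomialWeight α n k) * entropy (convPow μ k) +
          entropy (binomialWeight α n) := by
        rw [hlazy]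
        exact entropy_tsum_mul_le (isProbMeasure_binomialWeight hα0 hα1 n) hμ.convPow
    _ ≤ _ := by
        rw [tsum_eq_sum fun k hk => by simp [hsupp k hk],
          sum_ofReal_binomialWeight_mul_entropy hμ hH hα0 hα1]
        gcongr
        exact entropy_binomialWeight_le hα0 hα1 n

/-- The error term `log (n + 1)` bounds the entropy of `Bin(n, α)`. -/
theorem entropy_convPow_lazyMeasure_mem_Icc (hμ : IsProbMeasure μ) (hH : entropy μ ≠ ⊤)
    (hα0 : 0 ≤ α) (hα1 : α ≤ 1) (n : ℕ) :
    (entropy (convPow (lazyMeasure μ α) n)).toReal -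
        ∑ k ∈ range (n + 1), binomialWeight α n k * (entropy (convPow μ k)).toReal ∈
      Set.Icc 0 (log (n + 1)) := by
  have hS : 0 ≤ ∑ k ∈ range (n + 1), binomialWeight α n k * (entropy (convPow μ k)).toReal :=
    sum_nonneg fun k _ => mul_nonneg (binomialWeight_nonneg hα0 hα1 n k) ENNReal.toReal_nonneg
  have hupper := entropy_convPow_lazyMeasure_le hμ hH hα0 hα1 n
  rw [← ENNReal.ofReal_add hS (log_nonneg (by simp))] at hupper
  have hlower := sum_mul_entropy_le_entropy_sum (fun k _ => binomialWeight_nonneg hα0 hα1 n k)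
    (sum_binomialWeight α n) fun k _ => hμ.convPow k
  rw [sum_ofReal_binomialWeight_mul_entropy hμ hH hα0 hα1,
    ← funext (convPow_lazyMeasure hμ hα0 hα1 n),
    ENNReal.ofReal_le_iff_le_toReal (hupper.trans_lt ENNReal.ofReal_lt_top).ne] at hlower
  have := ENNReal.toReal_le_of_le_ofReal (add_nonneg hS (log_nonneg (by simp))) hupper
  constructor <;> linarith

end LazyEntropy

lemma tendsto_div_natCast_iff_isLittleO {x : ℕ → ℝ} {L : ℝ} :
    Tendsto (fun n => x n / n) atTop (𝓝 L) ↔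
      (fun n => x n - n * L) =o[atTop] (fun n => (n : ℝ)) := by
  rw [isLittleO_iff_tendsto' ((eventually_ne_atTop 0).mono fun n hn h =>
    absurd (Nat.cast_eq_zero.mp h) hn), ← tendsto_sub_nhds_zero_iff]
  refine tendsto_congr' ((eventually_ne_atTop 0).mono fun n hn => ?_)
  field_simp

lemma isLittleO_log_natCast_add_one : (fun n : ℕ => log (n + 1)) =o[atTop] (fun n => (n : ℝ)) := by
  have hlog : (fun n : ℕ => log (n + 1)) =o[atTop] (fun n : ℕ => (n : ℝ) + 1) :=
    isLittleO_log_id_atTop.comp_tendsto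
      (tendsto_atTop_add_const_right _ 1 tendsto_natCast_atTop_atTop)
  refine hlog.trans_isBigO (IsBigO.of_bound 2 ((eventually_ge_atTop 1).mono fun n hn => ?_))
  have : (1 : ℝ) ≤ n := by exact_mod_cast hn
  rw [norm_of_nonneg (by positivity), norm_of_nonneg (by positivity)]
  linarith

/-- Bound `|e k| ≤ C + ε k`; averaging over `Bin(n, α)`, of mean `α n`, gives `C + ε α n`. -/
theorem isLittleO_sum_binomialWeight_mul {α : ℝ} (hα0 : 0 ≤ α) (hα1 : α ≤ 1) {e : ℕ → ℝ}
    (he : e =o[atTop] (fun k => (k : ℝ))) :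
    (fun n => ∑ k ∈ range (n + 1), binomialWeight α n k * e k) =o[atTop] (fun n => (n : ℝ)) := by
  refine IsLittleO.of_bound fun ε hε => ?_
  obtain ⟨K, hK⟩ := eventually_atTop.1 (he.bound (half_pos hε))
  set C := ∑ j ∈ range K, |e j|
  have hC : 0 ≤ C := sum_nonneg fun j _ => abs_nonneg _
  have he_le : ∀ k, |e k| ≤ C + ε / 2 * k := fun k => by
    rcases lt_or_ge k K with hk | hk
    · have := single_le_sum (fun j _ => abs_nonneg (e j)) (mem_range.2 hk)
      have : 0 ≤ ε / 2 * k := by positivity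
      linarith
    · have := hK k hk
      rw [norm_eq_abs, Real.norm_natCast] at this
      linarith
  filter_upwards [eventually_ge_atTop ⌈2 * C / ε⌉₊] with n hn
  have hCn : C ≤ ε / 2 * n := by
    have := Nat.ceil_le.mp hn
    rw [div_le_iff₀ hε] at this
    linarith
  have hbn : ∀ k, 0 ≤ binomialWeight α n k := binomialWeight_nonneg hα0 hα1 n
  calc ‖∑ k ∈ range (n + 1), binomialWeight α n k * e k‖
      ≤ ∑ k ∈ range (n + 1), binomialWeight α n k * (C + ε / 2 * k) := by
        refine (norm_sum_le _ _).trans (sum_le_sum fun k _ => ?_)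
        rw [norm_mul, norm_of_nonneg (hbn k), norm_eq_abs]
        exact mul_le_mul_of_nonneg_left (he_le k) (hbn k)
    _ = C + ε / 2 * (n * α) := by
        simp only [fun k : ℕ => show binomialWeight α n k * (C + ε / 2 * k) =
          C * binomialWeight α n k + ε / 2 * (k * binomialWeight α n k) by ring]
        rw [sum_add_distrib, ← mul_sum, ← mul_sum, sum_binomialWeight,
          sum_natCast_mul_binomialWeight, mul_one]
    _ ≤ ε * ‖(n : ℝ)‖ := by
        rw [Real.norm_natCast]
        have : n * α ≤ n := mul_le_of_le_one_right (Nat.cast_nonneg n) hα1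
        nlinarith

end

theorem asymptotic_entropy_lazy_measure_general
    {G : Type*} [Group G] (μ : G → ℝ)
    (hμ : IsProbMeasure μ) (hH : entropy μ < ⊤)
    (α : ℝ) (hα0 : 0 < α) (hα1 : α ≤ 1) (L : ℝ)
    (hL : Tendsto (fun n : ℕ => (entropy (convPow μ n)).toReal / n) atTop (𝓝 L)) :
    Tendsto
      (fun n : ℕ =>
        (entropy (convPow (fun g : G => (1 - α) * (if g = 1 then 1 else 0) + α * μ g) n)).toReal
          / n)
      atTop (𝓝 (α * L)) := by
  set H : ℕ → ℝ := fun k => (entropy (convPow μ k)).toReal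
  set S : ℕ → ℝ := fun n => ∑ k ∈ range (n + 1), binomialWeight α n k * H k
  have hmean : (fun n => S n - n * (α * L)) =o[atTop] (fun n => (n : ℝ)) := by
    refine (isLittleO_sum_binomialWeight_mul hα0.le hα1
      (tendsto_div_natCast_iff_isLittleO.mp hL)).congr_left fun n => ?_
    show ∑ k ∈ range (n + 1), binomialWeight α n k * (H k - k * L) = S n - n * (α * L)
    rw [← mul_assoc, ← sum_natCast_mul_binomialWeight, sum_mul, ← sum_sub_distrib]
    exact sum_congr rfl fun k _ => by ring
  have hgap : (fun n => (entropy (convPow (lazyMeasure μ α) n)).toReal - S n) =o[atTop]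
      (fun n => (n : ℝ)) := by
    refine (isBigO_of_le _ fun n => ?_).trans_isLittleO isLittleO_log_natCast_add_one
    obtain ⟨h0, h1⟩ := entropy_convPow_lazyMeasure_mem_Icc hμ hH.ne hα0.le hα1 n
    rw [norm_of_nonneg h0, norm_of_nonneg (log_nonneg (by simp))]
    exact h1
  change Tendsto (fun n : ℕ => (entropy (convPow (lazyMeasure μ α) n)).toReal / n) atTop _
  rw [tendsto_div_natCast_iff_isLittleO]
  exact (hgap.add hmean).congr_left fun n => by ring

/-- M\"unchhausen entropy scaling: the lazy measure `ν = (1−α)δ_e + αμ` has asymptotic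
entropy `h(G,ν) = α · h(G,μ)`. -/
theorem asymptotic_entropy_lazy_measure
    {G : Type*} [Group G] [Countable G] (μ : G → ℝ)
    (hμ : IsProbMeasure μ) (hH : entropy μ < ⊤)
    (α : ℝ) (hα0 : 0 < α) (hα1 : α ≤ 1) (L : ℝ)
    (hL : Tendsto (fun n : ℕ => (entropy (convPow μ n)).toReal / n) atTop (𝓝 L)) :
    Tendsto
      (fun n : ℕ =>
        (entropy (convPow (fun g : G => (1 - α) * (if g = 1 then 1 else 0) + α * μ g) n)).toReal
          / n)
      atTop (𝓝 (α * L)) :=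
  asymptotic_entropy_lazy_measure_general μ hμ hH α hα0 hα1 L hL
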